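/- arXiv:1606.05033 — 3 statements merged into one kernel-verified Lean document; each statement's English description precedes it below -/
import Mathlib

section
/- Let P be a finite connected poset, and let G be an upper ideal of P containing all maximal elements of P. Suppose that for every x in P \ G, the subposet I_{>x} = {y ∈ P : y > x} is connected (as a poset, i.e., its comparability graph is connected). Then G is connected. -/
/-- A subset `S` of a poset is connected if any two of its elements are joined by
a path within `S` whose steps are comparable pairs. -/
def ConnOn {P : Type*} [PartialOrder P] (S : Set P) : Prop :=
  ∀ a ∈ S, ∀ b ∈ S,
    Relation.ReflTransGen (fun u v : P => u ∈ S ∧ v ∈ S ∧ (u < v ∨ v < u)) a b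

/-- Let `P` be a finite connected poset and `G` an upper ideal containing all maximal
elements of `P`.  If for every `x ∉ G` the subposet `{y | y > x}` is connected, then
`G` is connected. -/
theorem upper_ideal_connected {P : Type*} [PartialOrder P] [Finite P]
    (hP : ConnOn (Set.univ : Set P))
    (G : Set P)
    (hup : ∀ x ∈ G, ∀ y : P, x < y → y ∈ G)
    (hmax : ∀ x : P, (∀ y : P, ¬ x < y) → x ∈ G)
    (hconn : ∀ x : P, x ∉ G → ConnOn {y : P | x < y}) :
    ConnOn G := by
  classical
  set R : P → P → Prop := fun u v => u ∈ G ∧ v ∈ G ∧ (u < v ∨ v < u) with hR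
  have hwf : WellFounded ((· > ·) : P → P → Prop) := IsWellFounded.wf
  -- every element has an element of G above it
  have hex : ∀ x : P, ∃ y, y ∈ G ∧ x ≤ y := by
    refine fun x => hwf.induction (C := fun x => ∃ y, y ∈ G ∧ x ≤ y) x ?_
    intro z ih
    by_cases hz : z ∈ G
    · exact ⟨z, hz, le_refl z⟩
    · have : ¬ ∀ y, ¬ z < y := fun h => hz (hmax z h)
      push_neg at this
      obtain ⟨w, hw⟩ := this
      obtain ⟨y, hyG, hwy⟩ := ih w hw
      exact ⟨y, hyG, hw.le.trans hwy⟩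
  -- main lemma: elements of G above a common element are connected in G
  have L : ∀ x : P, ∀ a b : P, a ∈ G → b ∈ G → x ≤ a → x ≤ b →
      Relation.ReflTransGen R a b := by
    refine fun x => hwf.induction (C := fun x => ∀ a b : P, a ∈ G → b ∈ G → x ≤ a → x ≤ b →
      Relation.ReflTransGen R a b) x ?_
    intro z ih a b ha hb hza hzb
    by_cases hz : z ∈ G
    · have h1 : Relation.ReflTransGen R a z := by
        rcases eq_or_lt_of_le hza with h | h
        · exact h ▸ Relation.ReflTransGen.refl
        · exact Relation.ReflTransGen.single ⟨ha, hz, Or.inr h⟩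
      have h2 : Relation.ReflTransGen R z b := by
        rcases eq_or_lt_of_le hzb with h | h
        · exact h ▸ Relation.ReflTransGen.refl
        · exact Relation.ReflTransGen.single ⟨hz, hb, Or.inl h⟩
      exact h1.trans h2
    · have hza' : z < a := lt_of_le_of_ne hza (fun h => hz (h ▸ ha))
      have hzb' : z < b := lt_of_le_of_ne hzb (fun h => hz (h ▸ hb))
      have hpath := hconn z hz a hza' b hzb'
      have key : ∀ c : P,
          Relation.ReflTransGen
            (fun u v : P => u ∈ {y : P | z < y} ∧ v ∈ {y : P | z < y} ∧ (u < v ∨ v < u)) c b →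
          ∀ y, y ∈ G → c ≤ y → Relation.ReflTransGen R y b := by
        intro c hc
        induction hc using Relation.ReflTransGen.head_induction_on with
        | refl =>
          intro y hy hby
          rcases eq_or_lt_of_le hby with h | h
          · exact h ▸ Relation.ReflTransGen.refl
          · exact Relation.ReflTransGen.single ⟨hy, hb, Or.inr h⟩
        | head hcd hdb ihk =>
          rename_i c d
          intro y hy hcy
          obtain ⟨hcS, hdS, hcomp⟩ := hcd
          obtain ⟨y', hy'G, hdy'⟩ := hex d
          have htail := ihk y' hy'G hdy'
          have hyy' : Relation.ReflTransGen R y y' := by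
            rcases hcomp with h | h
            · exact ih c hcS y y' hy hy'G hcy (h.le.trans hdy')
            · exact ih d hdS y y' hy hy'G (h.le.trans hcy) hdy'
          exact hyy'.trans htail
      exact key a hpath a ha (le_refl a)
  -- conclude using connectedness of the whole poset
  intro a ha b hb
  have hpath := hP a (Set.mem_univ a) b (Set.mem_univ b)
  have key : ∀ c : P,
      Relation.ReflTransGen
        (fun u v : P => u ∈ (Set.univ : Set P) ∧ v ∈ (Set.univ : Set P) ∧ (u < v ∨ v < u)) c b →
      ∀ y, y ∈ G → c ≤ y → Relation.ReflTransGen R y b := by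
    intro c hc
    induction hc using Relation.ReflTransGen.head_induction_on with
    | refl =>
      intro y hy hby
      rcases eq_or_lt_of_le hby with h | h
      · exact h ▸ Relation.ReflTransGen.refl
      · exact Relation.ReflTransGen.single ⟨hy, hb, Or.inr h⟩
    | head hcd hdb ihk =>
      rename_i c d
      intro y hy hcy
      obtain ⟨-, -, hcomp⟩ := hcd
      obtain ⟨y', hy'G, hdy'⟩ := hex d
      have htail := ihk y' hy'G hdy'
      have hyy' : Relation.ReflTransGen R y y' := by
        rcases hcomp with h | h
        · exact L c y y' hy hy'G hcy (h.le.trans hdy')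
        · exact L d y y' hy hy'G (h.le.trans hcy) hdy'
      exact hyy'.trans htail
  exact key a hpath a ha (le_refl a)
end

section
/- The group G generated by the six involutions π_{(ij)} (over all pairs {i,j} ⊆ [4]) acting on Γ₄³ is abelian, every element of G is an involution, and G acts transitively on Γ₄³. -/
abbrev Triple := Fin 4 × Fin 4 × Fin 4

def rot (t : Triple) : Triple := (t.2.1, t.2.2, t.1)

def DistinctTriple (t : Triple) : Prop := t.1 ≠ t.2.1 ∧ t.1 ≠ t.2.2 ∧ t.2.1 ≠ t.2.2

def cyc (t u : Triple) : Prop := u = t ∨ u = rot t ∨ u = rot (rot t)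

def fourth (t : Triple) : Fin 4 := 2 - (t.1 + t.2.1 + t.2.2)

def piRaw (s : Finset (Fin 4)) (t : Triple) : Triple :=
  if s = {t.1, t.2.1} then (t.2.1, t.1, fourth t)
  else if s = {t.2.1, t.2.2} then (t.2.2, t.2.1, fourth t)
  else if s = {t.1, t.2.2} then (t.1, t.2.2, fourth t)
  else if s = {t.2.2, fourth t} then (t.1, t.2.1, fourth t)
  else if s = {t.2.1, fourth t} then (t.2.2, t.1, fourth t)
  else if s = {t.1, fourth t} then (t.2.1, t.2.2, fourth t)
  else t

/-- an element of the group generated by the `π_α`: a word in the generators -/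
def word (L : List (Finset (Fin 4))) (t : Triple) : Triple := L.foldr piRaw t

/-- the word uses only the generators `π_α` for 2-element subsets `α ⊆ [4]` -/
def ValidWord (L : List (Finset (Fin 4))) : Prop := ∀ s ∈ L, s.card = 2


/-!
Reading `Γ₄³` as the distinct triples modulo rotation, each `π_α` becomes a genuine map on
`Γ₄³`, and a finite check shows these six maps are commuting involutions. Hence every word
in them squares to the identity, and any two words commute. Transitivity reduces to reaching
every point from the base point `(0, 1, 2)`: if words `v` and `w` carry it to `x` and `y`,
then `w v` carries `x` to `y`, because `v` is an involution.
-/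

instance : DecidablePred DistinctTriple := fun t => by unfold DistinctTriple; infer_instance

instance : DecidableRel cyc := fun t u => by unfold cyc; infer_instance

section Monoid

variable {M : Type*} [Monoid M]

theorem List.commute_prod_prod {l₁ l₂ : List M} (h : ∀ x ∈ l₁, ∀ y ∈ l₂, Commute x y) :
    Commute l₁.prod l₂.prod :=
  Commute.list_prod_left _ _ fun x hx => Commute.list_prod_right _ _ (h x hx)

theorem List.prod_sq_eq_one {l : List M} (hcomm : ∀ x ∈ l, ∀ y ∈ l, Commute x y)
    (hsq : ∀ x ∈ l, x ^ 2 = 1) : l.prod ^ 2 = 1 := by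
  induction l with
  | nil => simp
  | cons a l ih =>
    have ha_l : Commute a l.prod :=
      Commute.list_prod_right _ _ fun y hy => hcomm a (by simp) y (by simp [hy])
    rw [List.prod_cons, ha_l.mul_pow, hsq a (by simp), one_mul]
    exact ih (fun x hx y hy => hcomm x (by simp [hx]) y (by simp [hy]))
      (fun x hx => hsq x (by simp [hx]))

end Monoid

theorem cyc_equivalence : Equivalence cyc where
  refl _ := .inl rfl
  symm := by
    rintro t _ (rfl | rfl | rfl)
    exacts [.inl rfl, .inr (.inr rfl), .inr (.inl rfl)]
  trans := by
    rintro t _ _ (rfl | rfl | rfl) (rfl | rfl | rfl) <;>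
      first | exact .inl rfl | exact .inr (.inl rfl) | exact .inr (.inr rfl)

theorem DistinctTriple.piRaw : ∀ (s : Finset (Fin 4)) {t : Triple}, DistinctTriple t →
    DistinctTriple (piRaw s t) := by decide

theorem word_append (L₁ L₂ : List (Finset (Fin 4))) (t : Triple) :
    word (L₁ ++ L₂) t = word L₁ (word L₂ t) :=
  List.foldr_append

theorem DistinctTriple.word (L : List (Finset (Fin 4))) {t : Triple} (ht : DistinctTriple t) :
    DistinctTriple (word L t) := by
  induction L with
  | nil => exact ht
  | cons s L ih => exact ih.piRaw s

theorem cyc_piRaw_rot :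
    ∀ (s : Finset (Fin 4)) (t : Triple), cyc (piRaw s t) (piRaw s (rot t)) := by
  decide

theorem cyc.piRaw (s : Finset (Fin 4)) {t u : Triple} (h : cyc t u) :
    cyc (piRaw s t) (piRaw s u) := by
  rcases h with rfl | rfl | rfl
  · exact cyc_equivalence.refl _
  · exact cyc_piRaw_rot s t
  · exact cyc_equivalence.trans (cyc_piRaw_rot s t) (cyc_piRaw_rot s (rot t))

theorem cyc_piRaw_piRaw_self : ∀ (s : Finset (Fin 4)) (t : Triple), DistinctTriple t →
    cyc (piRaw s (piRaw s t)) t := by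
  decide

theorem cyc_piRaw_comm : ∀ s : Finset (Fin 4), s.card = 2 → ∀ s' : Finset (Fin 4), s'.card = 2 →
    ∀ t : Triple, DistinctTriple t → cyc (piRaw s (piRaw s' t)) (piRaw s' (piRaw s t)) := by
  decide

def cycTripleSetoid : Setoid {t : Triple // DistinctTriple t} :=
  Setoid.comap Subtype.val ⟨cyc, cyc_equivalence⟩

/-- `Γ₄³` -/
abbrev CycTriple := Quotient cycTripleSetoid

namespace CycTriple

def mk (t : Triple) (ht : DistinctTriple t) : CycTriple := Quotient.mk _ ⟨t, ht⟩

theorem mk_eq_mk_iff {t u : Triple} (ht : DistinctTriple t) (hu : DistinctTriple u) :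
    mk t ht = mk u hu ↔ cyc t u :=
  Quotient.eq

def piMap (s : Finset (Fin 4)) : CycTriple → CycTriple :=
  Quotient.map (fun t => ⟨piRaw s t, t.2.piRaw s⟩) fun _ _ h => cyc.piRaw s h

theorem piMap_mk (s : Finset (Fin 4)) {t : Triple} (ht : DistinctTriple t) :
    piMap s (mk t ht) = mk (piRaw s t) (ht.piRaw s) :=
  rfl

theorem piMap_involutive (s : Finset (Fin 4)) : Function.Involutive (piMap s) := by
  rintro ⟨t⟩
  exact (mk_eq_mk_iff _ t.2).2 (cyc_piRaw_piRaw_self s t.1 t.2)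

def gen (s : Finset (Fin 4)) : Equiv.Perm CycTriple := (piMap_involutive s).toPerm _

theorem gen_sq (s : Finset (Fin 4)) : gen s ^ 2 = 1 :=
  Equiv.ext (piMap_involutive s)

theorem commute_gen {s s' : Finset (Fin 4)} (hs : s.card = 2) (hs' : s'.card = 2) :
    Commute (gen s) (gen s') := by
  ext ⟨t⟩
  exact (mk_eq_mk_iff _ _).2 (cyc_piRaw_comm s hs s' hs' t.1 t.2)

def wordPerm (L : List (Finset (Fin 4))) : Equiv.Perm CycTriple := (L.map gen).prod

theorem wordPerm_mk (L : List (Finset (Fin 4))) {t : Triple} (ht : DistinctTriple t) :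
    wordPerm L (mk t ht) = mk (word L t) (ht.word L) := by
  induction L with
  | nil => rfl
  | cons s L ih => exact (congrArg (gen s) ih).trans (piMap_mk s _)

theorem cyc_word_iff {L L' : List (Finset (Fin 4))} {t t' : Triple} (ht : DistinctTriple t)
    (ht' : DistinctTriple t') :
    cyc (word L t) (word L' t') ↔ wordPerm L (mk t ht) = wordPerm L' (mk t' ht') := by
  rw [wordPerm_mk, wordPerm_mk, mk_eq_mk_iff]

theorem wordPerm_append (L₁ L₂ : List (Finset (Fin 4))) :
    wordPerm (L₁ ++ L₂) = wordPerm L₁ * wordPerm L₂ := by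
  simp [wordPerm]

theorem commute_of_mem_map_gen {L₁ L₂ : List (Finset (Fin 4))} (h₁ : ValidWord L₁)
    (h₂ : ValidWord L₂) : ∀ x ∈ L₁.map gen, ∀ y ∈ L₂.map gen, Commute x y := by
  simp only [List.mem_map]
  rintro _ ⟨s, hs, rfl⟩ _ ⟨s', hs', rfl⟩
  exact commute_gen (h₁ s hs) (h₂ s' hs')

theorem commute_wordPerm {L₁ L₂ : List (Finset (Fin 4))} (h₁ : ValidWord L₁) (h₂ : ValidWord L₂) :
    Commute (wordPerm L₁) (wordPerm L₂) :=
  List.commute_prod_prod (commute_of_mem_map_gen h₁ h₂)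

theorem wordPerm_sq {L : List (Finset (Fin 4))} (hL : ValidWord L) : wordPerm L ^ 2 = 1 :=
  List.prod_sq_eq_one (commute_of_mem_map_gen hL hL) <| by
    simp only [List.mem_map]
    rintro _ ⟨s, -, rfl⟩
    exact gen_sq s

def generators : List (Finset (Fin 4)) := [{0, 1}, {0, 2}, {0, 3}, {1, 2}, {1, 3}, {2, 3}]

theorem validWord_of_mem_sublists : ∀ L ∈ generators.sublists, ValidWord L := by
  unfold ValidWord
  decide

-- Words without repetition suffice: `G` is abelian of exponent 2.
theorem exists_sublist_cyc_word_base : ∀ u : Triple, DistinctTriple u →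
    ∃ L ∈ generators.sublists, cyc (word L (0, 1, 2)) u := by
  decide

theorem exists_validWord_wordPerm_eq (x y : CycTriple) :
    ∃ L, ValidWord L ∧ wordPerm L x = y := by
  have base : DistinctTriple (0, 1, 2) := by decide
  have reach (z : CycTriple) : ∃ L, ValidWord L ∧ wordPerm L (mk _ base) = z := by
    induction z using Quotient.ind with
    | _ u =>
      obtain ⟨L, hL, h⟩ := exists_sublist_cyc_word_base u.1 u.2
      exact ⟨L, validWord_of_mem_sublists L hL,
        (wordPerm_mk L base).trans ((mk_eq_mk_iff _ u.2).2 h)⟩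
  obtain ⟨v, hv, rfl⟩ := reach x
  obtain ⟨w, hw, rfl⟩ := reach y
  refine ⟨w ++ v, fun s hs => (List.mem_append.1 hs).elim (hw s) (hv s), ?_⟩
  calc wordPerm (w ++ v) (wordPerm v (mk _ base))
      _ = wordPerm w ((wordPerm v ^ 2) (mk _ base)) := by rw [wordPerm_append, sq]; rfl
      _ = wordPerm w (mk _ base) := by rw [wordPerm_sq hv]; rfl

end CycTriple

open CycTriple in
/-- The group `G` generated by the six involutions `π_{(ij)}` acting on `Γ₄³`
is abelian, every element of `G` is an involution, and `G` acts transitively. -/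
theorem group_abelian_involutive_transitive :
    (∀ L₁ L₂ : List (Finset (Fin 4)), ValidWord L₁ → ValidWord L₂ →
      ∀ t : Triple, DistinctTriple t → cyc (word L₁ (word L₂ t)) (word L₂ (word L₁ t))) ∧
    (∀ L : List (Finset (Fin 4)), ValidWord L →
      ∀ t : Triple, DistinctTriple t → cyc (word L (word L t)) t) ∧
    (∀ t u : Triple, DistinctTriple t → DistinctTriple u →
      ∃ L : List (Finset (Fin 4)), ValidWord L ∧ cyc (word L t) u) := by
  refine ⟨fun L₁ L₂ h₁ h₂ t ht => ?_, fun L hL t ht => ?_, fun t u ht hu => ?_⟩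
  · rw [← word_append, ← word_append, cyc_word_iff ht ht, wordPerm_append, wordPerm_append,
      (commute_wordPerm h₁ h₂).eq]
  · rw [← word_append]
    refine (cyc_word_iff (L' := []) ht ht).2 ?_
    rw [wordPerm_append, ← sq, wordPerm_sq hL]
    rfl
  · obtain ⟨L, hL, h⟩ := exists_validWord_wordPerm_eq (mk t ht) (mk u hu)
    exact ⟨L, hL, (cyc_word_iff (L' := []) ht hu).2 h⟩
end

section
/- The group G generated by the maps π_{(ij)} acting on Γ₄³ embeds as a subgroup of (Z/2Z)⁴; in particular |G| = 8 and G acts simply transitively on Γ₄³. -/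
/-! A cyclic triple `(i j k)` on `[4]` is determined by its missing point `l` and the parity of
the permutation `i j k l`, so `label t := parity • 𝟙 + δ_l ∈ (ℤ/2)⁴` is a complete invariant of
the eight cyclic triples, with values the odd-weight vectors. `π_{(ij)}` keeps the parity and
moves the missing point from `l` to `k`, while `π_{(kl)}` moves it from `l` to `k` and flips the
parity; either way the label is translated by the indicator of `[4] \ s` for the transposed pair
`s`. Hence a word acts by translating labels by the sum of these indicators, which range over the
eight even-weight vectors, and these act simply transitively on the eight odd-weight labels. -/

instance (t : Triple) : Decidable (DistinctTriple t) := inferInstanceAs (Decidable (_ ∧ _ ∧ _))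
instance (t u : Triple) : Decidable (cyc t u) := inferInstanceAs (Decidable (_ ∨ _ ∨ _))
instance (L : List (Finset (Fin 4))) : Decidable (ValidWord L) :=
  inferInstanceAs (Decidable (∀ s ∈ L, _))

theorem List.foldr_invariant_add {α β A : Type*} [AddCommMonoid A] (f : α → β → β)
    {P : α → Prop} {Q : β → Prop} (ψ : β → A) (χ : α → A)
    (hf : ∀ a b, P a → Q b → Q (f a b) ∧ ψ (f a b) = ψ b + χ a) :
    ∀ L : List α, (∀ a ∈ L, P a) → ∀ b, Q b →
      Q (L.foldr f b) ∧ ψ (L.foldr f b) = ψ b + (L.map χ).sum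
  | [], _, b, hb => ⟨hb, by simp⟩
  | a :: L, hL, b, hb => by
    obtain ⟨hQ, hψ⟩ := List.foldr_invariant_add f ψ χ hf L (fun x hx => hL x (by simp [hx])) b hb
    obtain ⟨hQ', hψ'⟩ := hf a _ (hL a (by simp)) hQ
    refine ⟨hQ', ?_⟩
    rw [List.foldr_cons, hψ', hψ, List.map_cons, List.sum_cons, add_assoc, add_comm (χ a)]

def permParity (t : Triple) : ZMod 2 :=
  let v : Fin 4 → Fin 4 := ![t.1, t.2.1, t.2.2, fourth t]
  ∑ i : Fin 4, ∑ j : Fin 4, if i < j ∧ v j < v i then 1 else 0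

def label (t : Triple) : Fin 4 → ZMod 2 := fun i => permParity t + if i = fourth t then 1 else 0

def coIndicator (s : Finset (Fin 4)) : Fin 4 → ZMod 2 := fun i => if i ∈ s then 0 else 1

def translation (L : List (Finset (Fin 4))) : Fin 4 → ZMod 2 := (L.map coIndicator).sum

theorem translation_append (L L' : List (Finset (Fin 4))) :
    translation (L ++ L') = translation L + translation L' := by
  simp [translation]

theorem sum_label (t : Triple) : ∑ i, label t i = 1 := by
  simp [label, Finset.sum_add_distrib, show (4 : ZMod 2) = 0 from rfl]

theorem sum_coIndicator : ∀ s : Finset (Fin 4), s.card = 2 → ∑ i, coIndicator s i = 0 := by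
  decide

theorem sum_translation {L : List (Finset (Fin 4))} (hL : ValidWord L) :
    ∑ i, translation L i = 0 := by
  induction L with
  | nil => simp [translation]
  | cons s L ih =>
    simp only [translation, List.map_cons, List.sum_cons, Pi.add_apply,
      Finset.sum_add_distrib] at ih ⊢
    rw [sum_coIndicator s (hL s (by simp)), ih fun x hx => hL x (by simp [hx]), add_zero]

set_option maxRecDepth 4000 in
theorem cyc_iff_label_eq : ∀ t u : Triple, DistinctTriple t → DistinctTriple u →
    (cyc t u ↔ label t = label u) := by
  decide

theorem label_piRaw : ∀ s : Finset (Fin 4), s.card = 2 → ∀ t : Triple, DistinctTriple t →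
    DistinctTriple (piRaw s t) ∧ label (piRaw s t) = label t + coIndicator s := by
  decide

theorem label_word {L : List (Finset (Fin 4))} (hL : ValidWord L) {t : Triple}
    (ht : DistinctTriple t) :
    DistinctTriple (word L t) ∧ label (word L t) = label t + translation L :=
  List.foldr_invariant_add piRaw label coIndicator (fun s t hs ht => label_piRaw s hs t ht)
    L hL t ht

theorem cyc_word_iff {L L' : List (Finset (Fin 4))} (hL : ValidWord L) (hL' : ValidWord L')
    {t : Triple} (ht : DistinctTriple t) :
    cyc (word L t) (word L' t) ↔ translation L = translation L' := by
  obtain ⟨hd, hlabel⟩ := label_word hL ht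
  obtain ⟨hd', hlabel'⟩ := label_word hL' ht
  rw [cyc_iff_label_eq _ _ hd hd', hlabel, hlabel', add_right_inj]

-- An even vector is `∑_{k ≠ 0} v k • (δ₀ + δₖ)`, and `δ₀ + δₖ` is the co-indicator of `{0, k}ᶜ`.
def evenWord (v : Fin 4 → ZMod 2) : List (Finset (Fin 4)) :=
  ([1, 2, 3].filter (v · = 1)).map fun k => {0, k}ᶜ

theorem validWord_evenWord : ∀ v, ValidWord (evenWord v) := by
  decide

theorem translation_evenWord :
    ∀ v : Fin 4 → ZMod 2, ∑ i, v i = 0 → translation (evenWord v) = v := by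
  decide

theorem exists_validWord_phi_eq_iff (v : Fin 4 → ZMod 2) :
    (∃ L, ValidWord L ∧ translation L = v) ↔ ∑ i, v i = 0 := by
  constructor
  · rintro ⟨L, hL, rfl⟩
    exact sum_translation hL
  · intro hv
    exact ⟨evenWord v, validWord_evenWord v, translation_evenWord v hv⟩

theorem exists_word_cyc {t u : Triple} (ht : DistinctTriple t) (hu : DistinctTriple u) :
    ∃ L, ValidWord L ∧ cyc (word L t) u := by
  have hv : ∑ i, (label u - label t) i = 0 := by
    simp only [Pi.sub_apply, Finset.sum_sub_distrib, sum_label, sub_self]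
  obtain ⟨L, hL, hphi⟩ := (exists_validWord_phi_eq_iff _).2 hv
  obtain ⟨hd, hlabel⟩ := label_word hL ht
  refine ⟨L, hL, (cyc_iff_label_eq _ _ hd hu).2 ?_⟩
  rw [hlabel, hphi, add_sub_cancel]

theorem card_range_translation :
    Nat.card {v : Fin 4 → ZMod 2 // ∃ L, ValidWord L ∧ translation L = v} = 8 := by
  rw [Nat.card_congr (Equiv.subtypeEquivRight exists_validWord_phi_eq_iff),
    Nat.card_eq_fintype_card]
  rfl

/-- The group `G` generated by the `π_{(ij)}` acting on `Γ₄³` embeds as a subgroup of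
`(ℤ/2)⁴`; in particular `|G| = 8` and `G` acts simply transitively on `Γ₄³`:
(1) transitivity; (2) freeness (two words agreeing at one point agree everywhere);
(3) an additive map `φ` into `(ℤ/2)⁴` such that two generator words induce the same
element of `G` iff they have the same `φ`-value, whose set of values on generator
words has exactly `8` elements. -/
theorem group_embeds_in_Z2pow4 :
    (∀ t u : Triple, DistinctTriple t → DistinctTriple u →
      ∃ L : List (Finset (Fin 4)), ValidWord L ∧ cyc (word L t) u) ∧
    (∀ L L' : List (Finset (Fin 4)), ValidWord L → ValidWord L' →
      ∀ t : Triple, DistinctTriple t → cyc (word L t) (word L' t) →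
        ∀ t' : Triple, DistinctTriple t' → cyc (word L t') (word L' t')) ∧
    (∃ φ : List (Finset (Fin 4)) → (Fin 4 → ZMod 2),
      (∀ L L' : List (Finset (Fin 4)), φ (L ++ L') = φ L + φ L') ∧
      (∀ L L' : List (Finset (Fin 4)), ValidWord L → ValidWord L' →
        ((∀ t : Triple, DistinctTriple t → cyc (word L t) (word L' t)) ↔ φ L = φ L')) ∧
      Nat.card {v : Fin 4 → ZMod 2 // ∃ L, ValidWord L ∧ φ L = v} = 8) := by
  have base : DistinctTriple (0, 1, 2) := by decide
  refine ⟨fun t u ht hu => exists_word_cyc ht hu, ?_, translation, translation_append, ?_,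
    card_range_translation⟩
  · intro L L' hL hL' t ht h t' ht'
    exact (cyc_word_iff hL hL' ht').2 ((cyc_word_iff hL hL' ht).1 h)
  · intro L L' hL hL'
    exact ⟨fun h => (cyc_word_iff hL hL' base).1 (h _ base),
      fun h t ht => (cyc_word_iff hL hL' ht).2 h⟩
end
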